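/- arXiv:2003.08188 — 5 statements merged into one kernel-verified Lean document; each statement's English description precedes it below -/
import Mathlib

section
/- Let α > 0 and λ ∈ ℝ. Then for every t > 0, the function t ↦ E_{α,1}(−λ t^α) is differentiable and (d/dt) E_{α,1}(−λ t^α) = −λ t^{α−1} E_{α,α}(−λ t^α). -/
/-!
`E_{α,1}` is a power series with infinite radius of convergence, so it can be differentiated
termwise. Since `n / Γ(αn + 1) = 1 / (α Γ(α(n - 1) + α))`, its derivative is `E_{α,α} / α`, and
the chain rule with `d/dt (-λ t^α) = -λ α t^(α-1)` gives the formula. Convergence of all these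
series follows from the crude bound `y^(s-1) ≤ eʸ Γ(s + 1)` for `y ≥ 1`, obtained from
`yᵏ/k! ≤ eʸ` at `k = ⌊s⌋`.
-/

open Real Filter

/-- The (real) Mittag-Leffler function `E_{α,β}(x) = ∑_{n=0}^∞ xⁿ/Γ(αn+β)`. -/
noncomputable def mlE (a b x : ℝ) : ℝ :=
  ∑' n : ℕ, x ^ n / Real.Gamma (a * n + b)

theorem rpow_sub_one_le_exp_mul_Gamma_add_one {y s : ℝ} (hy : 1 ≤ y) (hs : 1 ≤ s) :
    y ^ (s - 1) ≤ exp y * Gamma (s + 1) := by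
  set k := ⌊s⌋₊
  have hk : (1 : ℝ) ≤ k := by exact_mod_cast Nat.le_floor (by exact_mod_cast hs)
  have hks : (k : ℝ) ≤ s := Nat.floor_le (by linarith)
  calc y ^ (s - 1) ≤ y ^ (k : ℝ) :=
        rpow_le_rpow_of_exponent_le hy (by linarith [Nat.lt_floor_add_one s])
    _ = y ^ k := rpow_natCast y k
    _ ≤ exp y * k.factorial := by
        have := pow_div_factorial_le_exp y (by linarith) k
        rwa [div_le_iff₀ (by positivity)] at this
    _ = exp y * Gamma (k + 1) := by rw [Gamma_nat_eq_factorial]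
    _ ≤ exp y * Gamma (s + 1) := by
        gcongr
        exact Gamma_strictMonoOn_Ici.monotoneOn (Set.mem_Ici.2 (by linarith))
          (Set.mem_Ici.2 (by linarith))
          (by linarith)

/-- With `y ^ a = 2 (|x| + 1)`, the bound `y ^ (s - 1) ≤ eʸ Γ(s + 1)` makes the terms
eventually dominated by a multiple of `2⁻ⁿ`. -/
theorem summable_pow_div_Gamma_mul_add {a : ℝ} (ha : 0 < a) (b x : ℝ) :
    Summable (fun n : ℕ => x ^ n / Gamma (a * n + b)) := by
  set c := |x|
  set y := (2 * (c + 1)) ^ a⁻¹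
  have hc : 0 ≤ c := abs_nonneg x
  have hya : y ^ a = 2 * (c + 1) := by
    rw [← rpow_mul (by positivity), inv_mul_cancel₀ ha.ne', rpow_one]
  have hy : 1 ≤ y := one_le_rpow (by linarith) (inv_nonneg.2 ha.le)
  have hy0 : 0 < y := by linarith
  refine .of_norm_bounded_eventually_nat
    (summable_geometric_two.mul_left (exp y * y ^ (2 - b))) ?_
  have hlarge : ∀ᶠ n : ℕ in atTop, 2 ≤ a * n + b :=
    (tendsto_atTop_add_const_right _ b
      (tendsto_natCast_atTop_atTop.const_mul_atTop ha)).eventually_ge_atTop 2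
  filter_upwards [hlarge] with n hn
  have hΓ : (y ^ a) ^ n ≤ exp y * y ^ (2 - b) * Gamma (a * n + b) := by
    have h := rpow_sub_one_le_exp_mul_Gamma_add_one hy (s := a * n + b - 1) (by linarith)
    have hsplit : y ^ (a * n + b - 1 - 1) = (y ^ a) ^ n / y ^ (2 - b) := by
      rw [show a * n + b - 1 - 1 = a * n - (2 - b) by ring, rpow_sub hy0, rpow_mul hy0.le,
        rpow_natCast]
    rw [hsplit, sub_add_cancel, div_le_iff₀ (by positivity)] at h
    linarith
  have hΓpos : 0 < Gamma (a * n + b) := Gamma_pos_of_pos (by linarith)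
  rw [norm_div, norm_pow, Real.norm_of_nonneg hΓpos.le, div_le_iff₀ hΓpos]
  calc ‖x‖ ^ n = (2 * c) ^ n * (1 / 2) ^ n := by rw [← mul_pow, Real.norm_eq_abs]; congr 1; ring
    _ ≤ (y ^ a) ^ n * (1 / 2) ^ n := by rw [hya]; gcongr; linarith
    _ ≤ exp y * y ^ (2 - b) * (1 / 2) ^ n * Gamma (a * n + b) := by
        nlinarith [pow_pos (by norm_num : (0 : ℝ) < 1 / 2) n]

theorem natCast_succ_div_Gamma {a : ℝ} (ha : a ≠ 0) (m : ℕ) :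
    ((m + 1 : ℕ) : ℝ) / Gamma (a * (m + 1 : ℕ) + 1) = (a * Gamma (a * m + a))⁻¹ := by
  have hm : ((m + 1 : ℕ) : ℝ) ≠ 0 := by positivity
  rw [Gamma_add_one (mul_ne_zero ha hm), mul_comm a, mul_assoc, div_mul_cancel_left₀ hm]
  push_cast
  ring_nf

theorem hasDerivAt_mlE_one {a : ℝ} (ha : 0 < a) (x : ℝ) :
    HasDerivAt (mlE a 1) (mlE a a x / a) x := by
  set R := |x| + 1
  set f' : ℕ → ℝ → ℝ := fun n y => n * y ^ (n - 1) / Gamma (a * n + 1)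
  have hderiv : ∀ (n : ℕ) (y : ℝ),
      HasDerivAt (fun z : ℝ => z ^ n / Gamma (a * n + 1)) (f' n y) y :=
    fun n y => (hasDerivAt_pow n y).div_const _
  have hshift : ∀ (m : ℕ) (y : ℝ), f' (m + 1) y = y ^ m / Gamma (a * m + a) / a := by
    intro m y
    simp only [f', Nat.add_sub_cancel, mul_div_right_comm _ (y ^ m),
      natCast_succ_div_Gamma ha.ne' m]
    ring
  have hsummable : ∀ y, Summable (fun n => f' n y) := fun y =>
    (summable_nat_add_iff 1).1 <| by
      simpa only [hshift] using (summable_pow_div_Gamma_mul_add ha a y).div_const a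
  have hbound : ∀ n, ∀ y ∈ Metric.ball (0 : ℝ) R, ‖f' n y‖ ≤ f' n R := by
    intro n y hy
    have hyR : |y| ≤ R := by simpa using (Metric.mem_ball.1 hy).le
    have hΓ : 0 < Gamma (a * n + 1) := Gamma_pos_of_pos (by positivity)
    simp only [f', norm_div, norm_mul, norm_pow, Real.norm_of_nonneg hΓ.le, Real.norm_eq_abs,
      Nat.abs_cast]
    gcongr
  have hx : x ∈ Metric.ball (0 : ℝ) R := by simp [R]
  have hvalue : ∑' n, f' n x = mlE a a x / a := by
    rw [(hsummable x).tsum_eq_zero_add, tsum_congr (fun m => hshift m x), tsum_div_const]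
    simp [f', mlE]
  rw [← hvalue]
  exact hasDerivAt_tsum_of_isPreconnected (hsummable R) Metric.isOpen_ball
    (convex_ball 0 R).isPreconnected (fun n y _ => hderiv n y) hbound hx
    (summable_pow_div_Gamma_mul_add ha 1 x) hx

/-- For `α > 0`, `λ ∈ ℝ` and `t > 0`, the function `t ↦ E_{α,1}(-λ t^α)` is differentiable and
`(d/dt) E_{α,1}(-λ t^α) = -λ t^(α-1) E_{α,α}(-λ t^α)`. -/
theorem deriv_mlE_one (a l : ℝ) (ha : 0 < a) :
    ∀ t : ℝ, 0 < t →
      HasDerivAt (fun s : ℝ => mlE a 1 (-l * s ^ a))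
        (-l * t ^ (a - 1) * mlE a a (-l * t ^ a)) t := by
  intro t ht
  have hinner : HasDerivAt (fun s : ℝ => -l * s ^ a) (-l * (a * t ^ (a - 1))) t :=
    (hasDerivAt_rpow_const (Or.inl ht.ne')).const_mul (-l)
  refine ((hasDerivAt_mlE_one ha (-l * t ^ a)).comp t hinner).congr_deriv ?_
  field_simp
end

section
/- Let 0 ≤ ν ≤ 1, 0 < μ < 1, set β := μ + ν(1−μ), let ω ∈ ℝ, and define u(t) := t^{β−1} E_{μ,β}(−ω t^μ) for t > 0. Then: (i) I^{(1−ν)(1−μ)} u(t) = E_{μ,1}(−ω t^μ) for every t > 0, so that lim_{t→0⁺} I^{(1−ν)(1−μ)} u(t) = 1; and (ii) the Hilfer fractional derivative of u satisfies D^{μ,ν} u(t) = −ω t^{β−1} E_{μ,β}(−ω t^μ) = −ω u(t) for every t > 0. -/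
/-!
Everything rests on the identity
`I^a [τ^(c-1) E_{μ,c}(x τ^μ)](t) = t^(a+c-1) E_{μ,a+c}(x t^μ)` for `a ≥ 0`, `c > 0`, obtained by
integrating the Mittag-Leffler series term by term with the Beta integral. The interchange of sum
and integral is legitimate because `Γ(s) ≥ A^(s-1) e^(-A)` for every `A ≥ 0`, which makes the series
converge geometrically. With `a = (1-ν)(1-μ)` and `c = β` we have `a + c = 1`, which is (i).
For (ii), the case `a = 1`, `c = μ` together with `E_{μ,1}(y) = 1 + y E_{μ,1+μ}(y)` gives
`E_{μ,1}(x t^μ) = 1 + x ∫₀ᵗ τ^(μ-1) E_{μ,μ}(x τ^μ) dτ`, so the derivative of (i) is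
`-ω t^(μ-1) E_{μ,μ}(-ω t^μ)`, and applying `I^{ν(1-μ)}` with `c = μ` returns `-ω u(t)`.
-/

/-- The (left) Riemann-Liouville fractional integral
`(I^α f)(t) = (1/Γ(α)) ∫₀ᵗ (t-τ)^(α-1) f(τ) dτ`, with `I⁰ f = f`. -/
noncomputable def rlI (a : ℝ) (f : ℝ → ℝ) (t : ℝ) : ℝ :=
  if a = 0 then f t
  else (Real.Gamma a)⁻¹ * ∫ τ in (0:ℝ)..t, (t - τ) ^ (a - 1) * f τ

/-- The Hilfer fractional derivative of order `(μ,ν)`: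
`(D^{μ,ν} u)(t) = I^{ν(1-μ)}[(d/dt)(I^{(1-ν)(1-μ)} u)](t)`. -/
noncomputable def hilferD (μ ν : ℝ) (u : ℝ → ℝ) (t : ℝ) : ℝ :=
  rlI (ν * (1 - μ)) (deriv (rlI ((1 - ν) * (1 - μ)) u)) t

open Real Filter Topology Set MeasureTheory

lemma rpow_mul_exp_neg_le_Gamma {A s : ℝ} (hA : 0 ≤ A) (hs : 1 ≤ s) :
    A ^ (s - 1) * exp (-A) ≤ Gamma s := by
  have hs0 : 0 < s := by linarith
  have hsub : Ioi A ⊆ Ioi 0 := Ioi_subset_Ioi hA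
  calc A ^ (s - 1) * exp (-A) = ∫ x in Ioi A, A ^ (s - 1) * exp (-x) := by
        rw [integral_const_mul, integral_exp_neg_Ioi]
    _ ≤ ∫ x in Ioi A, exp (-x) * x ^ (s - 1) := by
        refine setIntegral_mono_on ((integrableOn_exp_neg_Ioi A).const_mul _)
          ((GammaIntegral_convergent hs0).mono_set hsub) measurableSet_Ioi fun x hx => ?_
        rw [mul_comm]
        gcongr
        exact hx.le
    _ ≤ ∫ x in Ioi 0, exp (-x) * x ^ (s - 1) :=
        setIntegral_mono_set (GammaIntegral_convergent hs0)
          (ae_restrict_of_forall_mem measurableSet_Ioi fun x (hx : 0 < x) => by positivity)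
          (Eventually.of_forall hsub)
    _ = Gamma s := (Gamma_eq_integral hs0).symm

lemma summable_mlE_series {μ : ℝ} (hμ : 0 < μ) (b x : ℝ) :
    Summable (fun n : ℕ => x ^ n / Gamma (μ * n + b)) := by
  set A := (|x| + 1) ^ μ⁻¹ with hA
  have hA0 : 0 < A := by positivity
  have hAμ : A ^ μ = |x| + 1 := by
    rw [hA, ← rpow_mul (by positivity), inv_mul_cancel₀ hμ.ne', rpow_one]
  have hgeom : Summable fun n : ℕ => exp A * A ^ (1 - b) * (|x| / (|x| + 1)) ^ n :=
    (summable_geometric_of_lt_one (by positivity)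
      ((div_lt_one (by positivity)).2 (lt_add_one _))).mul_left _
  refine hgeom.of_norm_bounded_eventually_nat ?_
  have hlarge : Tendsto (fun n : ℕ => μ * n + b) atTop atTop :=
    tendsto_atTop_add_const_right _ b (tendsto_natCast_atTop_atTop.const_mul_atTop hμ)
  filter_upwards [hlarge.eventually_ge_atTop 1] with n hn
  have hΓ := rpow_mul_exp_neg_le_Gamma hA0.le hn
  have hpos : 0 < A ^ (μ * n + b - 1) * exp (-A) := by positivity
  rw [norm_div, norm_pow, norm_eq_abs, norm_eq_abs, abs_of_pos (hpos.trans_le hΓ)]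
  calc |x| ^ n / Gamma (μ * n + b) ≤ |x| ^ n / (A ^ (μ * n + b - 1) * exp (-A)) := by
        gcongr
    _ = exp A * A ^ (1 - b) * (|x| / (|x| + 1)) ^ n := by
        rw [div_pow, ← hAμ, ← rpow_natCast (A ^ μ), ← rpow_mul hA0.le, exp_neg,
          show μ * n + b - 1 = μ * n - (1 - b) by ring, rpow_sub hA0]
        field_simp

lemma continuous_mlE {μ : ℝ} (hμ : 0 < μ) (b : ℝ) : Continuous (mlE μ b) := by
  refine continuous_iff_continuousAt.2 fun y => ?_
  have hball : ContinuousOn (mlE μ b) (Metric.ball 0 (|y| + 1)) := by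
    refine continuousOn_tsum (fun n => ((continuous_pow n).div_const _).continuousOn)
      (summable_mlE_series hμ b (|y| + 1)).norm fun n z hz => ?_
    rw [mem_ball_zero_iff, norm_eq_abs] at hz
    rw [norm_div, norm_div, norm_pow, norm_pow, norm_of_nonneg (by positivity : 0 ≤ |y| + 1)]
    gcongr
    exact hz.le
  exact hball.continuousAt (Metric.isOpen_ball.mem_nhds (by simp))

lemma mlE_zero (μ b : ℝ) : mlE μ b 0 = (Gamma b)⁻¹ := by
  rw [mlE, tsum_eq_single 0 fun n hn => by simp [zero_pow hn]]
  simp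

lemma mlE_eq_inv_Gamma_add_mul {μ : ℝ} (hμ : 0 < μ) (b y : ℝ) :
    mlE μ b y = (Gamma b)⁻¹ + y * mlE μ (b + μ) y := by
  rw [mlE, (summable_mlE_series hμ b y).tsum_eq_zero_add, mlE, ← tsum_mul_left]
  congr 1
  · simp
  · refine tsum_congr fun n => ?_
    rw [pow_succ', Nat.cast_succ, mul_add_one, add_right_comm, mul_div_assoc, add_assoc]

lemma integral_sub_rpow_mul_rpow {a c t : ℝ} (ha : 0 < a) (hc : 0 < c) (ht : 0 < t) :
    ∫ τ in (0:ℝ)..t, (t - τ) ^ (a - 1) * τ ^ (c - 1) =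
      Gamma a * Gamma c / Gamma (a + c) * t ^ (a + c - 1) := by
  have hΓ : Complex.Gamma (c + a) ≠ 0 := by
    rw [← Complex.ofReal_add, Complex.Gamma_ofReal]
    exact_mod_cast (Gamma_pos_of_pos (add_pos hc ha)).ne'
  have hbeta : Complex.betaIntegral c a =
      Complex.Gamma c * Complex.Gamma a / Complex.Gamma (c + a) := by
    rw [Complex.Gamma_mul_Gamma_eq_betaIntegral (by simpa using hc) (by simpa using ha),
      mul_div_cancel_left₀ _ hΓ]
  apply Complex.ofReal_injective
  calc ((∫ τ in (0:ℝ)..t, (t - τ) ^ (a - 1) * τ ^ (c - 1) : ℝ) : ℂ)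
      = ∫ τ in (0:ℝ)..t, (τ : ℂ) ^ ((c : ℂ) - 1) * ((t : ℂ) - τ) ^ ((a : ℂ) - 1) := by
        rw [← intervalIntegral.integral_ofReal]
        refine intervalIntegral.integral_congr fun τ hτ => ?_
        rw [uIcc_of_le ht.le] at hτ
        push_cast [Complex.ofReal_cpow hτ.1, Complex.ofReal_cpow (sub_nonneg.2 hτ.2)]
        ring
    _ = (t : ℂ) ^ ((c : ℂ) + a - 1) * Complex.betaIntegral c a := Complex.betaIntegral_scaled _ _ ht
    _ = _ := by
        rw [hbeta]
        push_cast [Complex.ofReal_cpow ht.le, ← Complex.Gamma_ofReal]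
        ring_nf

lemma intervalIntegrable_sub_rpow_mul_rpow {a c t : ℝ} (ha : 0 < a) (hc : 0 < c) (ht : 0 < t) :
    IntervalIntegrable (fun τ => (t - τ) ^ (a - 1) * τ ^ (c - 1)) volume 0 t := by
  refine intervalIntegral.intervalIntegrable_of_integral_ne_zero ?_
  rw [integral_sub_rpow_mul_rpow ha hc ht]
  have := Gamma_pos_of_pos ha
  have := Gamma_pos_of_pos hc
  have := Gamma_pos_of_pos (add_pos ha hc)
  positivity

lemma mlE_term_mul_rpow {τ : ℝ} (hτ : 0 < τ) (μ c x : ℝ) (n : ℕ) :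
    x ^ n / Gamma (μ * n + c) * τ ^ (μ * n + c - 1) =
      τ ^ (c - 1) * ((x * τ ^ μ) ^ n / Gamma (μ * n + c)) := by
  rw [mul_pow, ← rpow_natCast (τ ^ μ), ← rpow_mul hτ.le, add_sub_assoc, rpow_add hτ]
  ring

lemma rpow_mul_mlE_eq_tsum {μ τ : ℝ} (hτ : 0 < τ) (c x : ℝ) :
    τ ^ (c - 1) * mlE μ c (x * τ ^ μ) =
      ∑' n : ℕ, x ^ n / Gamma (μ * n + c) * τ ^ (μ * n + c - 1) := by
  simp only [mlE_term_mul_rpow hτ, tsum_mul_left, mlE]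

lemma summable_mlE_term_mul_rpow {μ τ : ℝ} (hμ : 0 < μ) (hτ : 0 < τ) (c x : ℝ) :
    Summable fun n : ℕ => x ^ n / Gamma (μ * n + c) * τ ^ (μ * n + c - 1) := by
  simpa only [mlE_term_mul_rpow hτ] using (summable_mlE_series hμ c (x * τ ^ μ)).mul_left _

/-- Summing and integrating may be interchanged because the integrals of the absolute values of the
terms are the terms of the same series with `|x|` in place of `x`. -/
lemma integral_sub_rpow_mul_rpow_mul_mlE {μ a c t : ℝ} (hμ : 0 < μ) (ha : 0 < a) (hc : 0 < c)
    (ht : 0 < t) (x : ℝ) :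
    ∫ τ in (0:ℝ)..t, (t - τ) ^ (a - 1) * (τ ^ (c - 1) * mlE μ c (x * τ ^ μ)) =
      Gamma a * (t ^ (a + c - 1) * mlE μ (a + c) (x * t ^ μ)) := by
  set F : ℝ → ℕ → ℝ → ℝ := fun y n τ =>
    (t - τ) ^ (a - 1) * (y ^ n / Gamma (μ * n + c) * τ ^ (μ * n + c - 1)) with hF
  have hc' (n : ℕ) : 0 < μ * n + c := by positivity
  have hint (n : ℕ) : IntegrableOn (F x n) (Ioc 0 t) := by
    have := (intervalIntegrable_sub_rpow_mul_rpow ha (hc' n) ht).const_mul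
      (x ^ n / Gamma (μ * n + c))
    rw [intervalIntegrable_iff_integrableOn_Ioc_of_le ht.le] at this
    refine this.congr_fun (fun τ _ => by simp only [hF]; ring) measurableSet_Ioc
  have hterm (y : ℝ) (n : ℕ) : ∫ τ in Ioc 0 t, F y n τ =
      Gamma a * (y ^ n / Gamma (μ * n + (a + c)) * t ^ (μ * n + (a + c) - 1)) := by
    simp only [hF, mul_left_comm ((t - _) ^ (a - 1)), ← intervalIntegral.integral_of_le ht.le]
    rw [intervalIntegral.integral_const_mul, integral_sub_rpow_mul_rpow ha (hc' n) ht,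
      show a + (μ * n + c) = μ * n + (a + c) by ring]
    field_simp [(Gamma_pos_of_pos (hc' n)).ne']
  have hnorm (n : ℕ) : ∫ τ in Ioc 0 t, ‖F x n τ‖ = ∫ τ in Ioc 0 t, F |x| n τ := by
    refine setIntegral_congr_fun measurableSet_Ioc fun τ hτ => ?_
    simp only [hF, norm_mul, norm_div, norm_pow, norm_eq_abs,
      abs_of_pos (Gamma_pos_of_pos (hc' n)), abs_of_nonneg (rpow_nonneg (sub_nonneg.2 hτ.2) _),
      abs_of_pos (rpow_pos_of_pos hτ.1 _)]
  have hsum : Summable fun n => ∫ τ in Ioc 0 t, ‖F x n τ‖ := by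
    simpa only [hnorm, hterm] using
      (summable_mlE_term_mul_rpow hμ ht (a + c) |x|).mul_left (Gamma a)
  calc ∫ τ in (0:ℝ)..t, (t - τ) ^ (a - 1) * (τ ^ (c - 1) * mlE μ c (x * τ ^ μ))
      = ∫ τ in Ioc 0 t, ∑' n, F x n τ := by
        rw [intervalIntegral.integral_of_le ht.le]
        refine setIntegral_congr_fun measurableSet_Ioc fun τ hτ => ?_
        simp only [hF, rpow_mul_mlE_eq_tsum hτ.1, tsum_mul_left]
    _ = Gamma a * (t ^ (a + c - 1) * mlE μ (a + c) (x * t ^ μ)) := by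
        rw [← integral_tsum_of_summable_integral_norm hint hsum]
        simp only [hterm, tsum_mul_left, rpow_mul_mlE_eq_tsum ht]

lemma continuous_mlE_mul_rpow {μ : ℝ} (hμ : 0 < μ) (c x : ℝ) :
    Continuous fun τ : ℝ => mlE μ c (x * τ ^ μ) :=
  (continuous_mlE hμ c).comp (continuous_const.mul (continuous_rpow_const hμ.le))

lemma rlI_congr {a t : ℝ} {f g : ℝ → ℝ} (ht : 0 < t) (h : EqOn f g (Ioc 0 t)) :
    rlI a f t = rlI a g t := by
  unfold rlI
  split_ifs
  · exact h ⟨ht, le_rfl⟩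
  · rw [intervalIntegral.integral_of_le ht.le, intervalIntegral.integral_of_le ht.le,
      setIntegral_congr_fun measurableSet_Ioc fun τ hτ => by rw [h hτ]]

lemma rlI_const_mul (a k : ℝ) (f : ℝ → ℝ) (t : ℝ) :
    rlI a (fun s => k * f s) t = k * rlI a f t := by
  unfold rlI
  split_ifs
  · rfl
  · simp only [mul_left_comm _ k, intervalIntegral.integral_const_mul]

lemma rlI_one (f : ℝ → ℝ) (t : ℝ) : rlI 1 f t = ∫ τ in (0:ℝ)..t, f τ := by
  simp [rlI]

lemma rlI_rpow_mul_mlE {μ a c t : ℝ} (hμ : 0 < μ) (ha : 0 ≤ a) (hc : 0 < c) (ht : 0 < t)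
    (x : ℝ) :
    rlI a (fun s => s ^ (c - 1) * mlE μ c (x * s ^ μ)) t =
      t ^ (a + c - 1) * mlE μ (a + c) (x * t ^ μ) := by
  rcases ha.eq_or_lt with rfl | ha
  · simp [rlI]
  · rw [rlI, if_neg ha.ne', integral_sub_rpow_mul_rpow_mul_mlE hμ ha hc ht,
      inv_mul_cancel_left₀ (Gamma_pos_of_pos ha).ne']

lemma hasDerivAt_mlE_one_mul_rpow {μ t : ℝ} (hμ : 0 < μ) (ht : 0 < t) (x : ℝ) :
    HasDerivAt (fun s => mlE μ 1 (x * s ^ μ)) (x * (t ^ (μ - 1) * mlE μ μ (x * t ^ μ))) t := by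
  set g : ℝ → ℝ := fun τ => τ ^ (μ - 1) * mlE μ μ (x * τ ^ μ)
  have hprim : ∀ s, 0 < s → mlE μ 1 (x * s ^ μ) = 1 + x * ∫ τ in (0:ℝ)..s, g τ := by
    intro s hs
    rw [← rlI_one, rlI_rpow_mul_mlE hμ zero_le_one hμ hs, add_sub_cancel_left,
      mlE_eq_inv_Gamma_add_mul hμ, Gamma_one, inv_one]
    ring
  have hcont : ContinuousOn g (Ioi 0) :=
    (continuousOn_id.rpow_const fun τ hτ => Or.inl (ne_of_gt hτ)).mul
      (continuous_mlE_mul_rpow hμ μ x).continuousOn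
  have hint : IntervalIntegrable g volume 0 t :=
    (intervalIntegral.intervalIntegrable_rpow' (by linarith)).mul_continuousOn
      (continuous_mlE_mul_rpow hμ μ x).continuousOn
  have hFTC := intervalIntegral.integral_hasDerivAt_right hint
    (hcont.stronglyMeasurableAtFilter isOpen_Ioi t ht) (hcont.continuousAt (Ioi_mem_nhds ht))
  refine ((hFTC.const_mul x).const_add 1).congr_of_eventuallyEq ?_
  filter_upwards [Ioi_mem_nhds ht] with s hs using hprim s hs

/-- Let `0 ≤ ν ≤ 1`, `0 < μ < 1`, `β := μ + ν(1-μ)`, `ω ∈ ℝ` and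
`u(t) := t^(β-1) E_{μ,β}(-ω t^μ)`. Then (i) `I^{(1-ν)(1-μ)} u(t) = E_{μ,1}(-ω t^μ)` for `t > 0`,
so `I^{(1-ν)(1-μ)} u(t) → 1` as `t → 0⁺`; and (ii) `D^{μ,ν} u(t) = -ω u(t)` for `t > 0`. -/
theorem hilferD_mlE (μ ν ω : ℝ) (hν0 : 0 ≤ ν) (hν1 : ν ≤ 1) (hμ0 : 0 < μ) (hμ1 : μ < 1) :
    (∀ t : ℝ, 0 < t →
      rlI ((1 - ν) * (1 - μ))
        (fun s => s ^ (μ + ν * (1 - μ) - 1) * mlE μ (μ + ν * (1 - μ)) (-ω * s ^ μ)) t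
        = mlE μ 1 (-ω * t ^ μ)) ∧
    Filter.Tendsto
      (rlI ((1 - ν) * (1 - μ))
        (fun s => s ^ (μ + ν * (1 - μ) - 1) * mlE μ (μ + ν * (1 - μ)) (-ω * s ^ μ)))
      (nhdsWithin 0 (Set.Ioi 0)) (nhds 1) ∧
    (∀ t : ℝ, 0 < t →
      hilferD μ ν
        (fun s => s ^ (μ + ν * (1 - μ) - 1) * mlE μ (μ + ν * (1 - μ)) (-ω * s ^ μ)) t
        = -ω * (t ^ (μ + ν * (1 - μ) - 1) * mlE μ (μ + ν * (1 - μ)) (-ω * t ^ μ))) := by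
  set β := μ + ν * (1 - μ)
  set u : ℝ → ℝ := fun s => s ^ (β - 1) * mlE μ β (-ω * s ^ μ)
  have hβ : 0 < β := by nlinarith
  have hI : ∀ t : ℝ, 0 < t → rlI ((1 - ν) * (1 - μ)) u t = mlE μ 1 (-ω * t ^ μ) := fun t ht => by
    rw [rlI_rpow_mul_mlE hμ0 (by nlinarith) hβ ht, show (1 - ν) * (1 - μ) + β = 1 by ring,
      sub_self, rpow_zero, one_mul]
  refine ⟨hI, ?_, fun t ht => ?_⟩
  · have hlim := (continuous_mlE_mul_rpow hμ0 1 (-ω)).tendsto 0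
    rw [zero_rpow hμ0.ne', mul_zero, mlE_zero, Gamma_one, inv_one] at hlim
    exact (hlim.mono_left nhdsWithin_le_nhds).congr'
      (eventually_nhdsWithin_of_forall fun t ht => (hI t ht).symm)
  · have hderiv : EqOn (deriv (rlI ((1 - ν) * (1 - μ)) u))
        (fun s => -ω * (s ^ (μ - 1) * mlE μ μ (-ω * s ^ μ))) (Ioc 0 t) := fun s hs =>
      ((hasDerivAt_mlE_one_mul_rpow hμ0 hs.1 (-ω)).congr_of_eventuallyEq
        (eventually_of_mem (Ioi_mem_nhds hs.1) hI)).deriv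
    rw [hilferD, rlI_congr ht hderiv, rlI_const_mul, rlI_rpow_mul_mlE hμ0 (by nlinarith) hμ0 ht,
      show ν * (1 - μ) + μ = β by ring]
end

section
/- Let α > 0, β > 0, γ ∈ ℝ, and let λ be a real number with λ > |γ|^{1/α}. Then the Laplace transform of t ↦ t^{β−1} E_{α,β}(γ t^α) exists and ∫₀^∞ e^{−λ t} t^{β−1} E_{α,β}(γ t^α) dt = λ^{α−β}/(λ^α − γ). -/
open MeasureTheory Set
open scoped ENNReal

theorem MeasureTheory.integrable_tsum_of_summable_integral_norm {α E ι : Type*}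
    [MeasurableSpace α] {μ : Measure α} [NormedAddCommGroup E] [CompleteSpace E]
    [SecondCountableTopology E] [MeasurableSpace E] [BorelSpace E] [Countable ι]
    {F : ι → α → E} (hF_int : ∀ i, Integrable (F i) μ)
    (hF_sum : Summable fun i ↦ ∫ a, ‖F i a‖ ∂μ) :
    Integrable (fun a ↦ ∑' i, F i a) μ := by
  refine ⟨(AEMeasurable.tsum fun i ↦ (hF_int i).aemeasurable).aestronglyMeasurable, ?_⟩
  have h_lintegral (i : ι) : ∫⁻ a, ‖F i a‖ₑ ∂μ = ENNReal.ofReal (∫ a, ‖F i a‖ ∂μ) :=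
    (ofReal_integral_norm_eq_lintegral_enorm (hF_int i)).symm
  calc ∫⁻ a, ‖∑' i, F i a‖ₑ ∂μ ≤ ∫⁻ a, ∑' i, ‖F i a‖ₑ ∂μ :=
        lintegral_mono fun _ ↦ enorm_tsum_le_tsum_enorm
    _ = ∑' i, ∫⁻ a, ‖F i a‖ₑ ∂μ := lintegral_tsum fun i ↦ (hF_int i).aemeasurable.enorm
    _ = ENNReal.ofReal (∑' i, ∫ a, ‖F i a‖ ∂μ) := by
        rw [funext h_lintegral,
          ENNReal.ofReal_tsum_of_nonneg (fun i ↦ integral_nonneg fun _ ↦ norm_nonneg _) hF_sum]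
    _ < ∞ := ENNReal.ofReal_lt_top

namespace Real

theorem integrableOn_rpow_mul_exp_neg_mul_Ioi {s r : ℝ} (hs : 0 < s) (hr : 0 < r) :
    IntegrableOn (fun t ↦ t ^ (s - 1) * exp (-(r * t))) (Ioi 0) := by
  simpa [rpow_one] using
    integrableOn_rpow_mul_exp_neg_mul_rpow (p := 1) (by linarith) one_pos hr

theorem integral_div_Gamma_mul_rpow_mul_exp_neg_mul_Ioi (c : ℝ) {s r : ℝ} (hs : 0 < s)
    (hr : 0 < r) :
    ∫ t in Ioi 0, c / Gamma s * (t ^ (s - 1) * exp (-(r * t))) = c * (1 / r) ^ s := by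
  rw [integral_const_mul, integral_rpow_mul_exp_neg_mul_Ioi hs hr]
  field_simp [(Gamma_pos_of_pos hs).ne']

theorem integral_norm_div_Gamma_mul_rpow_mul_exp_neg_mul_Ioi (c : ℝ) {s r : ℝ} (hs : 0 < s)
    (hr : 0 < r) :
    ∫ t in Ioi 0, ‖c / Gamma s * (t ^ (s - 1) * exp (-(r * t)))‖ = |c| * (1 / r) ^ s := by
  rw [← integral_div_Gamma_mul_rpow_mul_exp_neg_mul_Ioi |c| hs hr]
  refine setIntegral_congr_fun measurableSet_Ioi fun t (ht : 0 < t) ↦ ?_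
  rw [norm_mul, norm_div, norm_eq_abs c, norm_of_nonneg (Gamma_pos_of_pos hs).le,
    norm_of_nonneg (mul_nonneg (rpow_nonneg ht.le _) (exp_pos _).le)]

theorem hasSum_pow_mul_one_div_rpow {a b c l : ℝ} (hl : 0 < l) (hc : |c| < l ^ a) :
    HasSum (fun n : ℕ ↦ c ^ n * (1 / l) ^ (a * n + b)) (l ^ (a - b) / (l ^ a - c)) := by
  have hla : 0 < l ^ a := (abs_nonneg c).trans_lt hc
  have h_ratio : ‖c * (l ^ a)⁻¹‖ < 1 := by
    rwa [norm_mul, norm_inv, norm_of_nonneg hla.le, norm_eq_abs, mul_inv_lt_iff₀ hla, one_mul]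
  have h_term (n : ℕ) :
      c ^ n * (1 / l) ^ (a * n + b) = (c * (l ^ a)⁻¹) ^ n * (l ^ b)⁻¹ := by
    rw [one_div, inv_rpow hl.le, rpow_add hl, rpow_mul hl.le, rpow_natCast, mul_inv, mul_pow,
      inv_pow, mul_assoc]
  have h_sum : (1 - c * (l ^ a)⁻¹)⁻¹ * (l ^ b)⁻¹ = l ^ (a - b) / (l ^ a - c) := by
    have : l ^ a - c ≠ 0 := by linarith [le_abs_self c]
    rw [rpow_sub hl]
    field_simp
  simpa only [h_term, h_sum] using (hasSum_geometric_of_norm_lt_one h_ratio).mul_right (l ^ b)⁻¹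

end Real

open Real in
theorem exp_neg_mul_mul_rpow_mul_mlE {a b g l t : ℝ} (ht : 0 < t) :
    exp (-l * t) * (t ^ (b - 1) * mlE a b (g * t ^ a)) =
      ∑' n : ℕ, g ^ n / Gamma (a * n + b) * (t ^ (a * n + b - 1) * exp (-(l * t))) := by
  rw [mlE, ← tsum_mul_left, ← tsum_mul_left]
  refine tsum_congr fun n ↦ ?_
  rw [mul_pow, ← rpow_natCast (t ^ a), ← rpow_mul ht.le, add_sub_assoc, rpow_add ht, neg_mul]
  ring

open Real in
/-- For `α > 0`, `β > 0`, `γ ∈ ℝ` and real `λ > |γ|^(1/α)`, the Laplace transform of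
`t ↦ t^(β-1) E_{α,β}(γ t^α)` exists and
`∫₀^∞ e^(-λ t) t^(β-1) E_{α,β}(γ t^α) dt = λ^(α-β)/(λ^α - γ)`. -/
theorem laplace_mlE (a b g l : ℝ) (ha : 0 < a) (hb : 0 < b) (hl : |g| ^ (1 / a) < l) :
    MeasureTheory.IntegrableOn
      (fun t : ℝ => Real.exp (-l * t) * (t ^ (b - 1) * mlE a b (g * t ^ a))) (Set.Ioi 0) ∧
    ∫ t in Set.Ioi (0:ℝ), Real.exp (-l * t) * (t ^ (b - 1) * mlE a b (g * t ^ a))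
      = l ^ (a - b) / (l ^ a - g) := by
  have hl0 : 0 < l := (rpow_nonneg (abs_nonneg g) _).trans_lt hl
  have hg : |g| < l ^ a := by
    rwa [one_div, rpow_inv_lt_iff_of_pos (abs_nonneg g) hl0.le ha] at hl
  have hs (n : ℕ) : 0 < a * n + b := by positivity
  set F : ℕ → ℝ → ℝ :=
    fun n t ↦ g ^ n / Gamma (a * n + b) * (t ^ (a * n + b - 1) * exp (-(l * t)))
  have hF_int (n : ℕ) : IntegrableOn (F n) (Ioi 0) :=
    (integrableOn_rpow_mul_exp_neg_mul_Ioi (hs n) hl0).const_mul _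
  have hF_sum : Summable fun n ↦ ∫ t in Ioi 0, ‖F n t‖ := by
    simp only [F, integral_norm_div_Gamma_mul_rpow_mul_exp_neg_mul_Ioi _ (hs _) hl0, abs_pow]
    exact (hasSum_pow_mul_one_div_rpow hl0 (by rwa [abs_abs])).summable
  have h_expand : EqOn (fun t ↦ exp (-l * t) * (t ^ (b - 1) * mlE a b (g * t ^ a)))
      (fun t ↦ ∑' n, F n t) (Ioi 0) := fun t ht ↦ exp_neg_mul_mul_rpow_mul_mlE ht
  refine ⟨IntegrableOn.congr_fun (integrable_tsum_of_summable_integral_norm hF_int hF_sum)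
    h_expand.symm measurableSet_Ioi, ?_⟩
  rw [setIntegral_congr_fun measurableSet_Ioi h_expand]
  refine (hasSum_integral_of_summable_integral_norm hF_int hF_sum).unique ?_
  simpa only [F, integral_div_Gamma_mul_rpow_mul_exp_neg_mul_Ioi _ (hs _) hl0]
    using hasSum_pow_mul_one_div_rpow hl0 hg
end

section
/- Let 0 ≤ ν ≤ 1 and 0 < μ < 1. Let f : (0,∞) → ℝ be continuous, suppose the function t ↦ I^{(1−ν)(1−μ)} f(t) is differentiable on (0,∞) with continuous derivative g, suppose there exist constants M ≥ 0 and a ≥ 0 such that |f(t)| ≤ M e^{a t} and |g(t)| ≤ M e^{a t} for all t > 0, and suppose lim_{t→0⁺} I^{(1−ν)(1−μ)} f(t) = c. Then for every real λ > a, the Laplace transform of the Hilfer fractional derivative D^{μ,ν} f := I^{ν(1−μ)} g satisfies ∫₀^∞ e^{−λ t} (D^{μ,ν} f)(t) dt = λ^μ ∫₀^∞ e^{−λ t} f(t) dt − λ^{−ν(1−μ)} c. -/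
/-!
Under the Laplace transform `L`, the Riemann-Liouville integral `I^α` becomes multiplication
by `λ^(-α)`: the Laplace integrand of `I^α h` is `Γ(α)⁻¹` times the convolution of those of `h`
and of `s ↦ s^(α-1)`, and `∫₀^∞ s^(α-1) e^(-λs) ds = λ^(-α) Γ(α)`. The derivative `g` of
`Φ = I^((1-ν)(1-μ)) f` satisfies `L g = λ L Φ - Φ(0⁺)`, and the exponents combine as
`-ν(1-μ) + 1 - (1-ν)(1-μ) = μ`.
-/

open MeasureTheory Set Filter Topology Real

lemma integrableOn_exp_neg_mul_mul_of_abs_le {h : ℝ → ℝ} (hc : ContinuousOn h (Ioi 0))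
    {K a l : ℝ} (hb : ∀ t : ℝ, 0 < t → |h t| ≤ K * exp (a * t)) (hl : a < l) :
    IntegrableOn (fun t => exp (-l * t) * h t) (Ioi 0) := by
  refine Integrable.mono' ((exp_neg_integrableOn_Ioi 0 (sub_pos.2 hl)).const_mul K)
    ((continuous_exp.comp (continuous_const_mul (-l))).continuousOn.mul hc
      |>.aestronglyMeasurable measurableSet_Ioi) ?_
  filter_upwards [ae_restrict_mem measurableSet_Ioi] with t ht
  calc ‖exp (-l * t) * h t‖ = exp (-l * t) * |h t| := by
        rw [norm_mul, norm_of_nonneg (exp_pos _).le, norm_eq_abs]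
    _ ≤ exp (-l * t) * (K * exp (a * t)) := by gcongr; exact hb t ht
    _ = K * exp (-(l - a) * t) := by rw [mul_left_comm, ← exp_add]; ring_nf

lemma integrableOn_rpow_sub_one_mul_exp_neg_mul {α l : ℝ} (hα : 0 < α) (hl : 0 < l) :
    IntegrableOn (fun s : ℝ => s ^ (α - 1) * exp (-l * s)) (Ioi 0) := by
  simpa using integrableOn_rpow_mul_exp_neg_mul_rpow (s := α - 1) (by linarith) one_pos hl

section LaplaceRiemannLiouville

variable {α l : ℝ} {h : ℝ → ℝ}

lemma exp_neg_mul_mul_rlI (hα : α ≠ 0) (t : ℝ) :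
    exp (-l * t) * rlI α h t = (Gamma α)⁻¹ *
      ∫ τ in (0:ℝ)..t, (exp (-l * τ) * h τ) * ((t - τ) ^ (α - 1) * exp (-l * (t - τ))) := by
  rw [rlI, if_neg hα, mul_left_comm, ← intervalIntegral.integral_const_mul]
  congr 1
  refine intervalIntegral.integral_congr fun τ _ => ?_
  have : exp (-l * t) = exp (-l * τ) * exp (-l * (t - τ)) := by rw [← exp_add]; ring_nf
  simp only [this]
  ring

lemma integrableOn_exp_neg_mul_mul_rlI (hα : 0 ≤ α) (hl : 0 < l)
    (hh : IntegrableOn (fun t => exp (-l * t) * h t) (Ioi 0)) :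
    IntegrableOn (fun t => exp (-l * t) * rlI α h t) (Ioi 0) := by
  rcases hα.eq_or_lt with rfl | hα
  · simpa [rlI] using hh
  refine IntegrableOn.congr_fun (((integrable_posConvolution hh
    (integrableOn_rpow_sub_one_mul_exp_neg_mul hα hl) (ContinuousLinearMap.mul ℝ ℝ)).integrableOn
      ).const_mul (Gamma α)⁻¹) (fun t ht => ?_) measurableSet_Ioi
  rw [exp_neg_mul_mul_rlI hα.ne', posConvolution, indicator_of_mem ht]
  rfl

lemma integral_exp_neg_mul_mul_rlI (hα : 0 ≤ α) (hl : 0 < l)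
    (hh : IntegrableOn (fun t => exp (-l * t) * h t) (Ioi 0)) :
    ∫ t in Ioi 0, exp (-l * t) * rlI α h t = l ^ (-α) * ∫ t in Ioi 0, exp (-l * t) * h t := by
  rcases hα.eq_or_lt with rfl | hα
  · simp [rlI]
  have hconv := integral_posConvolution hh (integrableOn_rpow_sub_one_mul_exp_neg_mul hα hl)
    (ContinuousLinearMap.mul ℝ ℝ)
  have hGamma : ∫ s in Ioi 0, s ^ (α - 1) * exp (-l * s) = l ^ (-α) * Gamma α := by
    simp_rw [neg_mul, integral_rpow_mul_exp_neg_mul_Ioi hα hl, one_div, inv_rpow hl.le,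
      rpow_neg hl.le]
  simp only [ContinuousLinearMap.mul_apply', hGamma] at hconv
  rw [setIntegral_congr_fun measurableSet_Ioi fun t _ => exp_neg_mul_mul_rlI hα.ne' t,
    integral_const_mul, hconv]
  field_simp [(Gamma_pos_of_pos hα).ne']

end LaplaceRiemannLiouville

lemma integral_exp_neg_mul_mul_deriv {Φ g : ℝ → ℝ} {c l : ℝ}
    (hderiv : ∀ t : ℝ, 0 < t → HasDerivAt Φ (g t) t) (hlim : Tendsto Φ (𝓝[>] 0) (𝓝 c))
    (hΦ : IntegrableOn (fun t => exp (-l * t) * Φ t) (Ioi 0))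
    (hg : IntegrableOn (fun t => exp (-l * t) * g t) (Ioi 0)) :
    ∫ t in Ioi 0, exp (-l * t) * g t = l * (∫ t in Ioi 0, exp (-l * t) * Φ t) - c := by
  set H := Function.update (fun t => exp (-l * t) * Φ t) 0 c
  have hH : EqOn H (fun t => exp (-l * t) * Φ t) (Ioi 0) := fun t ht =>
    Function.update_of_ne (ne_of_gt ht) _ _
  have hderivH : ∀ t ∈ Ioi (0:ℝ),
      HasDerivAt H (exp (-l * t) * g t - l * (exp (-l * t) * Φ t)) t := by
    intro t ht
    have := ((hasDerivAt_id t).const_mul (-l)).exp.mul (hderiv t ht)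
    refine (this.congr_of_eventuallyEq (hH.eventuallyEq_of_mem (Ioi_mem_nhds ht))).congr_deriv ?_
    simp only [id, mul_one]
    ring
  have hcont : ContinuousWithinAt H (Ici 0) 0 := by
    rw [continuousWithinAt_update_same, Ici_sdiff_left]
    simpa using ((continuous_exp.comp (continuous_const_mul (-l))).tendsto 0).mono_left
      nhdsWithin_le_nhds |>.mul hlim
  have hD := hg.sub (hΦ.const_mul l)
  have hH_atTop : Tendsto H atTop (𝓝 0) := tendsto_zero_of_hasDerivAt_of_integrableOn_Ioi
    hderivH hD (hΦ.congr_fun hH.symm measurableSet_Ioi)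
  have hFTC := integral_Ioi_of_hasDerivAt_of_tendsto hcont hderivH hD hH_atTop
  rw [integral_sub hg (hΦ.const_mul l), integral_const_mul] at hFTC
  simp only [H, Function.update_self] at hFTC
  linarith

theorem laplace_hilferD_general (μ ν : ℝ) (hν0 : 0 ≤ ν) (hν1 : ν ≤ 1) (hμ1 : μ < 1)
    (f g : ℝ → ℝ) (c M a : ℝ) (ha : 0 ≤ a)
    (hf : ContinuousOn f (Set.Ioi 0))
    (hg : ContinuousOn g (Set.Ioi 0))
    (hderiv : ∀ t : ℝ, 0 < t → HasDerivAt (rlI ((1 - ν) * (1 - μ)) f) (g t) t)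
    (hfb : ∀ t : ℝ, 0 < t → |f t| ≤ M * Real.exp (a * t))
    (hgb : ∀ t : ℝ, 0 < t → |g t| ≤ M * Real.exp (a * t))
    (hlim : Filter.Tendsto (rlI ((1 - ν) * (1 - μ)) f) (nhdsWithin 0 (Set.Ioi 0)) (nhds c)) :
    ∀ l : ℝ, a < l →
      ∫ t in Set.Ioi (0:ℝ), Real.exp (-l * t) * rlI (ν * (1 - μ)) g t
        = l ^ μ * (∫ t in Set.Ioi (0:ℝ), Real.exp (-l * t) * f t)
          - l ^ (-(ν * (1 - μ))) * c := by
  intro l hl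
  have hl0 : 0 < l := ha.trans_lt hl
  have hβ : 0 ≤ (1 - ν) * (1 - μ) := mul_nonneg (by linarith) (by linarith)
  have hγ : 0 ≤ ν * (1 - μ) := mul_nonneg hν0 (by linarith)
  have hLf := integrableOn_exp_neg_mul_mul_of_abs_le hf hfb hl
  have hLg := integrableOn_exp_neg_mul_mul_of_abs_le hg hgb hl
  have hpow : l ^ (-(ν * (1 - μ))) * (l * l ^ (-((1 - ν) * (1 - μ)))) = l ^ μ := by
    rw [mul_comm l, ← rpow_add_one hl0.ne', ← rpow_add hl0]
    ring_nf
  rw [integral_exp_neg_mul_mul_rlI hγ hl0 hLg,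
    integral_exp_neg_mul_mul_deriv hderiv hlim (integrableOn_exp_neg_mul_mul_rlI hβ hl0 hLf) hLg,
    integral_exp_neg_mul_mul_rlI hβ hl0 hLf, ← hpow]
  ring

/-- Laplace transform of the Hilfer fractional derivative. Let `0 ≤ ν ≤ 1`, `0 < μ < 1`,
`f : (0,∞) → ℝ` continuous, suppose `t ↦ I^{(1-ν)(1-μ)} f(t)` is differentiable on `(0,∞)`
with continuous derivative `g`, both `f` and `g` of exponential order (`|f(t)|, |g(t)| ≤ M e^(a t)`),
and `I^{(1-ν)(1-μ)} f(t) → c` as `t → 0⁺`. Then for every `λ > a`, the Laplace transform of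
`D^{μ,ν} f = I^{ν(1-μ)} g` satisfies
`∫₀^∞ e^(-λ t) (D^{μ,ν} f)(t) dt = λ^μ ∫₀^∞ e^(-λ t) f(t) dt - λ^{-ν(1-μ)} c`. -/
theorem laplace_hilferD (μ ν : ℝ) (hν0 : 0 ≤ ν) (hν1 : ν ≤ 1) (hμ0 : 0 < μ) (hμ1 : μ < 1)
    (f g : ℝ → ℝ) (c M a : ℝ) (hM : 0 ≤ M) (ha : 0 ≤ a)
    (hf : ContinuousOn f (Set.Ioi 0))
    (hg : ContinuousOn g (Set.Ioi 0))
    (hderiv : ∀ t : ℝ, 0 < t → HasDerivAt (rlI ((1 - ν) * (1 - μ)) f) (g t) t)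
    (hfb : ∀ t : ℝ, 0 < t → |f t| ≤ M * Real.exp (a * t))
    (hgb : ∀ t : ℝ, 0 < t → |g t| ≤ M * Real.exp (a * t))
    (hlim : Filter.Tendsto (rlI ((1 - ν) * (1 - μ)) f) (nhdsWithin 0 (Set.Ioi 0)) (nhds c)) :
    ∀ l : ℝ, a < l →
      ∫ t in Set.Ioi (0:ℝ), Real.exp (-l * t) * rlI (ν * (1 - μ)) g t
        = l ^ μ * (∫ t in Set.Ioi (0:ℝ), Real.exp (-l * t) * f t)
          - l ^ (-(ν * (1 - μ))) * c :=
  laplace_hilferD_general μ ν hν0 hν1 hμ1 f g c M a ha hf hg hderiv hfb hgb hlim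
end

section
/- Let H be a Hilbert space, let (λₖ)_{k≥1} be a strictly increasing sequence of positive real numbers with λₖ → ∞, and let (wₖ)_{k≥1} be a sequence in H such that ∑ₖ ‖wₖ‖/(1+λₖ) < ∞. If ∑_{k=1}^∞ wₖ/(η+λₖ) = 0 in H for every real number η > 0, then wₖ = 0 for every k. -/
/-!
Subtracting the identities `∑ₖ wₖ/(η+λₖ) = 0` and `∑ₖ wₖ/(c+λₖ) = 0` and dividing by `c - η`
gives `∑ₖ wₖ/((η+λₖ)(c+λₖ)) = 0`. Iterating this divided difference at the points
`cᵢ = 1/(i+2)` and evaluating at `η = 1` yields `∑ₖ wₖ/((1+λₖ) ∏_{i<n} (cᵢ+λₖ)) = 0` for every `n`.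
Relative to the weight of `w₀`, the weight of `wₖ` (`k ≥ 1`) is at most
`(1+λ₀) rⁿ/(1+λₖ)` with `r = (1+λ₀)/(1+λ₁) < 1`, so `‖w₀‖ = O(rⁿ)` and `w₀ = 0`.
Dropping `w₀` and repeating gives `wₖ = 0` for all `k`.
-/

open Finset Filter Function

section

variable {E : Type*} [NormedAddCommGroup E] [NormedSpace ℝ E]

lemma inv_add_le_mul_inv_one_add {η x : ℝ} (hη : 0 < η) (hx : 0 ≤ x) :
    (η + x)⁻¹ ≤ (1 + η⁻¹) * (1 + x)⁻¹ := by
  rw [← div_eq_mul_inv, le_div_iff₀ (by positivity), inv_mul_le_iff₀ (by positivity)]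
  have : η * η⁻¹ = 1 := mul_inv_cancel₀ hη.ne'
  nlinarith [mul_nonneg hx (inv_nonneg.2 hη.le)]

lemma summable_inv_add_smul [CompleteSpace E] {l : ℕ → ℝ} {w : ℕ → E} (hl : ∀ k, 0 ≤ l k)
    (hsum : Summable fun k => ‖w k‖ / (1 + l k)) {η : ℝ} (hη : 0 < η) :
    Summable fun k => (η + l k)⁻¹ • w k := by
  refine (hsum.mul_left (1 + η⁻¹)).of_norm_bounded fun k => ?_
  have hηk : 0 < η + l k := by linarith [hl k]
  rw [norm_smul, Real.norm_of_nonneg (inv_nonneg.2 hηk.le), div_eq_inv_mul, ← mul_assoc]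
  gcongr
  exact inv_add_le_mul_inv_one_add hη (hl k)

lemma HasSum.inv_add_smul_inv_add_smul {l : ℕ → ℝ} {v : ℕ → E} {η c : ℝ}
    (hη : ∀ k, η + l k ≠ 0) (hc : ∀ k, c + l k ≠ 0) (hηc : η ≠ c)
    (h₁ : HasSum (fun k => (η + l k)⁻¹ • v k) 0) (h₂ : HasSum (fun k => (c + l k)⁻¹ • v k) 0) :
    HasSum (fun k => (η + l k)⁻¹ • (c + l k)⁻¹ • v k) 0 := by
  convert (h₁.sub h₂).const_smul (c - η)⁻¹ using 1
  · funext k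
    have hcη : c - η ≠ 0 := sub_ne_zero.2 hηc.symm
    rw [← sub_smul, smul_smul, smul_smul]
    congr 1
    field_simp [hη k, hc k]
    ring
  · simp

lemma hasSum_inv_add_smul_prod_inv_smul {c : ℕ → ℝ} (hc : Injective c) (hc₀ : ∀ i, 0 < c i)
    {l : ℕ → ℝ} (hl : ∀ k, 0 < l k) {w : ℕ → E}
    (h : ∀ η : ℝ, 0 < η → HasSum (fun k => (η + l k)⁻¹ • w k) 0) (n : ℕ) :
    ∀ η : ℝ, 0 < η → (∀ i < n, η ≠ c i) →
      HasSum (fun k => (η + l k)⁻¹ • (∏ i ∈ range n, (c i + l k))⁻¹ • w k) 0 := by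
  induction n with
  | zero =>
    intro η hη _
    simpa using h η hη
  | succ n ih =>
    intro η hη hηc
    have hstep := HasSum.inv_add_smul_inv_add_smul (fun k => (add_pos hη (hl k)).ne')
      (fun k => (add_pos (hc₀ n) (hl k)).ne') (hηc n n.lt_succ_self)
      (ih η hη fun i hi => hηc i (hi.trans n.lt_succ_self))
      (ih (c n) (hc₀ n) fun i hi => hc.ne hi.ne')
    convert hstep using 3 with k
    rw [prod_range_succ, mul_inv, mul_comm, mul_smul]

lemma add_le_div_mul_add {c x y z : ℝ} (hc : c ≤ 1) (hx : 0 ≤ x) (hxy : x ≤ y) (hyz : y ≤ z) :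
    c + x ≤ (1 + x) / (1 + y) * (c + z) := by
  rw [div_mul_eq_mul_div, le_div_iff₀ (by linarith)]
  nlinarith [mul_nonneg (sub_nonneg.2 hc) (sub_nonneg.2 hxy)]

lemma prod_add_le_pow_mul_prod_add {c : ℕ → ℝ} (hc₀ : ∀ i, 0 ≤ c i) (hc₁ : ∀ i, c i ≤ 1)
    {x y z : ℝ} (hx : 0 ≤ x) (hxy : x ≤ y) (hyz : y ≤ z) (n : ℕ) :
    ∏ i ∈ range n, (c i + x) ≤ ((1 + x) / (1 + y)) ^ n * ∏ i ∈ range n, (c i + z) := by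
  rw [← card_range n, ← prod_const, card_range, ← prod_mul_distrib]
  exact prod_le_prod (fun i _ => by linarith [hc₀ i])
    fun i _ => add_le_div_mul_add (hc₁ i) hx hxy hyz

lemma norm_le_tsum_of_hasSum_smul_eq_zero {a : ℕ → ℝ} {w : ℕ → E}
    (h : HasSum (fun k => a k • w k) 0) (ha : 0 < a 0) {g : ℕ → ℝ} (hg : Summable g)
    (hag : ∀ k, |a (k + 1)| * ‖w (k + 1)‖ ≤ a 0 * g k) :
    ‖w 0‖ ≤ ∑' k, g k := by
  have htail : HasSum (fun k => a (k + 1) • w (k + 1)) (-(a 0 • w 0)) := by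
    simpa using (hasSum_nat_add_iff' 1).2 h
  have hle := htail.norm_le_of_bounded (hg.hasSum.mul_left (a 0))
    fun k => by simpa [norm_smul] using hag k
  rw [norm_neg, norm_smul, Real.norm_of_nonneg ha.le] at hle
  exact le_of_mul_le_mul_left hle ha

lemma norm_apply_zero_le_pow_mul_tsum {l : ℕ → ℝ} (hmono : Monotone l) (hpos : ∀ k, 0 < l k)
    {w : ℕ → E} (hsum : Summable fun k => ‖w k‖ / (1 + l k))
    (h : ∀ η : ℝ, 0 < η → HasSum (fun k => (η + l k)⁻¹ • w k) 0)
    {c : ℕ → ℝ} (hc : Injective c) (hc₀ : ∀ i, 0 < c i) (hc₁ : ∀ i, c i < 1) (n : ℕ) :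
    ‖w 0‖ ≤ (1 + l 0) * ((1 + l 0) / (1 + l 1)) ^ n *
      ∑' k, ‖w (k + 1)‖ / (1 + l (k + 1)) := by
  set r := (1 + l 0) / (1 + l 1)
  set P : ℕ → ℝ := fun k => ∏ i ∈ range n, (c i + l k)
  have hP (k : ℕ) : 0 < P k := prod_pos fun i _ => add_pos (hc₀ i) (hpos k)
  have hl (k : ℕ) : 0 < 1 + l k := by linarith [hpos k]
  have hn := hasSum_inv_add_smul_prod_inv_smul hc hc₀ hpos h n 1 one_pos fun i _ => (hc₁ i).ne'
  simp only [smul_smul] at hn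
  change HasSum (fun k => ((1 + l k)⁻¹ * (P k)⁻¹) • w k) 0 at hn
  rw [← tsum_mul_left]
  refine norm_le_tsum_of_hasSum_smul_eq_zero hn (mul_pos (inv_pos.2 (hl 0)) (inv_pos.2 (hP 0)))
    (((summable_nat_add_iff 1).2 hsum).mul_left _) fun k => ?_
  have hinv : (P (k + 1))⁻¹ ≤ r ^ n * (P 0)⁻¹ := by
    rw [← div_eq_mul_inv, le_div_iff₀ (hP 0), inv_mul_le_iff₀ (hP (k + 1)), mul_comm]
    exact prod_add_le_pow_mul_prod_add (fun i => (hc₀ i).le) (fun i => (hc₁ i).le) (hpos 0).le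
      (hmono zero_le_one) (hmono (Nat.le_add_left 1 k)) n
  have hl₀ := hl 0
  have hlk := hl (k + 1)
  rw [abs_of_pos (mul_pos (inv_pos.2 hlk) (inv_pos.2 (hP (k + 1))))]
  calc (1 + l (k + 1))⁻¹ * (P (k + 1))⁻¹ * ‖w (k + 1)‖
      ≤ (1 + l (k + 1))⁻¹ * (r ^ n * (P 0)⁻¹) * ‖w (k + 1)‖ := by gcongr
    _ = _ := by field_simp

lemma apply_zero_eq_zero_of_forall_hasSum_inv_add_smul {l : ℕ → ℝ} (hmono : StrictMono l)
    (hpos : ∀ k, 0 < l k) {w : ℕ → E} (hsum : Summable fun k => ‖w k‖ / (1 + l k))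
    (h : ∀ η : ℝ, 0 < η → HasSum (fun k => (η + l k)⁻¹ • w k) 0) :
    w 0 = 0 := by
  have hc : Injective fun i : ℕ => ((i : ℝ) + 2)⁻¹ := fun i j hij => by simpa using hij
  have hbound := norm_apply_zero_le_pow_mul_tsum hmono.monotone hpos hsum h hc
    (fun i => by positivity) fun i => inv_lt_one_of_one_lt₀ (by linarith [i.cast_nonneg (α := ℝ)])
  have hr₀ : 0 ≤ (1 + l 0) / (1 + l 1) := div_nonneg (by linarith [hpos 0]) (by linarith [hpos 1])
  have hr₁ : (1 + l 0) / (1 + l 1) < 1 :=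
    (div_lt_one (by linarith [hpos 1])).2 (by linarith [hmono zero_lt_one])
  have hlim := ((tendsto_pow_atTop_nhds_zero_of_lt_one hr₀ hr₁).const_mul (1 + l 0)).mul_const
    (∑' k, ‖w (k + 1)‖ / (1 + l (k + 1)))
  rw [mul_zero, zero_mul] at hlim
  exact norm_le_zero_iff.1 (ge_of_tendsto' hlim hbound)

end

theorem eigen_separation_general {H : Type*} [NormedAddCommGroup H] [InnerProductSpace ℝ H]
    [CompleteSpace H] (l : ℕ → ℝ) (hmono : StrictMono l) (hpos : ∀ k, 0 < l k)
    (w : ℕ → H) (hsum : Summable (fun k => ‖w k‖ / (1 + l k)))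
    (hzero : ∀ η : ℝ, 0 < η → ∑' k : ℕ, (η + l k)⁻¹ • w k = 0) :
    ∀ k, w k = 0 := by
  have hhead (n : ℕ) (hn : ∀ η : ℝ, 0 < η → HasSum (fun k => (η + l (k + n))⁻¹ • w (k + n)) 0) :
      w n = 0 := by
    simpa using apply_zero_eq_zero_of_forall_hasSum_inv_add_smul (hmono.comp add_left_strictMono)
      (fun k => hpos (k + n)) ((summable_nat_add_iff n).2 hsum) hn
  have hshift (n : ℕ) :
      ∀ η : ℝ, 0 < η → HasSum (fun k => (η + l (k + n))⁻¹ • w (k + n)) 0 := by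
    induction n with
    | zero =>
      simpa using fun η hη =>
        (summable_inv_add_smul (fun k => (hpos k).le) hsum hη).hasSum_iff.2 (hzero η hη)
    | succ n ih =>
      intro η hη
      simpa [hhead n ih, add_right_comm _ 1 n, add_assoc] using (hasSum_nat_add_iff' 1).2 (ih η hη)
  exact fun n => hhead n (hshift n)

/-- Let `H` be a Hilbert space, `(λₖ)` a strictly increasing sequence of positive reals with
`λₖ → ∞`, and `(wₖ)` a sequence in `H` with `∑ₖ ‖wₖ‖/(1+λₖ) < ∞`. If `∑ₖ wₖ/(η+λₖ) = 0` in `H`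
for every `η > 0`, then `wₖ = 0` for every `k`. -/
theorem eigen_separation {H : Type*} [NormedAddCommGroup H] [InnerProductSpace ℝ H]
    [CompleteSpace H] (l : ℕ → ℝ) (hmono : StrictMono l) (hpos : ∀ k, 0 < l k)
    (htop : Filter.Tendsto l Filter.atTop Filter.atTop)
    (w : ℕ → H) (hsum : Summable (fun k => ‖w k‖ / (1 + l k)))
    (hzero : ∀ η : ℝ, 0 < η → ∑' k : ℕ, (η + l k)⁻¹ • w k = 0) :
    ∀ k, w k = 0 :=
  eigen_separation_general l hmono hpos w hsum hzero
end
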